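/- Let W be a random vector in R^p whose distribution is invariant under every diagonal matrix g with diagonal entries in {1, -1} (i.e., gW has the same distribution as W), and suppose P(W = W_tilde) = 0 where W_tilde is an independent copy of W. Then the multivariate Kendall's tau matrix of W is diagonal: its (i, j) entry is 0 for every pair i != j. -/

import Mathlib

open Matrix MeasureTheory

open scoped Classical in
/-- The multivariate Kendall's tau kernel: for `x ≠ y` it is the rank-one matrix
`(x - y)(x - y)ᵀ / ‖x - y‖²` (Euclidean norm), and it is `0` when `x = y`. -/
noncomputable def kendallKernel {p : ℕ} (x y : EuclideanSpace ℝ (Fin p)) :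
    Matrix (Fin p) (Fin p) ℝ :=
  if x = y then 0 else Matrix.of fun i j => (x i - y i) * (x j - y j) / ‖x - y‖ ^ 2

/-- The population multivariate Kendall's tau matrix of a random vector `X`, namely
`E[(X - X̃)(X - X̃)ᵀ / ‖X - X̃‖²]` where `X̃` is an independent copy of `X` (realized on the
product space `Ω × Ω` with the product measure `μ × μ`). -/
noncomputable def kendallTau {Ω : Type*} [MeasurableSpace Ω] (μ : Measure Ω) {p : ℕ}
    (X : Ω → EuclideanSpace ℝ (Fin p)) : Matrix (Fin p) (Fin p) ℝ :=
  Matrix.of fun i j => ∫ q : Ω × Ω, kendallKernel (X q.1) (X q.2) i j ∂(μ.prod μ)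
/-! Flipping the sign of the `i`-th coordinate preserves both the law of `W` and Euclidean
distances, while it negates the `(i, j)` entry of the Kendall kernel for every `j ≠ i`.
Hence `τᵢⱼ = -τᵢⱼ`. -/

lemma kendallKernel_apply {p : ℕ} (x y : EuclideanSpace ℝ (Fin p)) (i j : Fin p) :
    kendallKernel x y i j = (x i - y i) * (x j - y j) / ‖x - y‖ ^ 2 := by
  unfold kendallKernel
  split_ifs with h <;> simp [h]

lemma measurable_kendallKernel_apply {p : ℕ} (i j : Fin p) :
    Measurable fun q : EuclideanSpace ℝ (Fin p) × EuclideanSpace ℝ (Fin p) =>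
      kendallKernel q.1 q.2 i j := by
  simp only [kendallKernel_apply]
  fun_prop

lemma norm_sub_signFlip {p : ℕ} {s : Fin p → ℝ} (hs : ∀ k, |s k| = 1)
    (x y : EuclideanSpace ℝ (Fin p)) :
    ‖(WithLp.toLp 2 (fun k => s k * x k) : EuclideanSpace ℝ (Fin p)) -
        WithLp.toLp 2 (fun k => s k * y k)‖ = ‖x - y‖ := by
  simp only [EuclideanSpace.norm_eq, PiLp.sub_apply, ← mul_sub, norm_mul, Real.norm_eq_abs, hs,
    one_mul]

lemma kendallKernel_signFlip_apply {p : ℕ} {s : Fin p → ℝ} (hs : ∀ k, |s k| = 1)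
    (x y : EuclideanSpace ℝ (Fin p)) (i j : Fin p) :
    kendallKernel (WithLp.toLp 2 (fun k => s k * x k)) (WithLp.toLp 2 (fun k => s k * y k)) i j =
      s i * s j * kendallKernel x y i j := by
  rw [kendallKernel_apply, kendallKernel_apply, norm_sub_signFlip hs]
  ring

section KendallTau

variable {Ω : Type*} [MeasurableSpace Ω] (μ : Measure Ω) {p : ℕ}

lemma kendallTau_signFlip_apply (X : Ω → EuclideanSpace ℝ (Fin p)) {s : Fin p → ℝ}
    (hs : ∀ k, |s k| = 1) (i j : Fin p) :
    kendallTau μ (fun ω => WithLp.toLp 2 (fun k => s k * X ω k)) i j =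
      s i * s j * kendallTau μ X i j := by
  simp only [kendallTau, Matrix.of_apply, kendallKernel_signFlip_apply hs, integral_const_mul]

lemma kendallTau_apply_eq_integral_map [SigmaFinite μ] {X : Ω → EuclideanSpace ℝ (Fin p)}
    (hX : Measurable X) (i j : Fin p) :
    kendallTau μ X i j = ∫ q, kendallKernel q.1 q.2 i j ∂((μ.map X).prod (μ.map X)) := by
  rw [Measure.map_prod_map _ _ hX hX,
    integral_map (hX.prodMap hX).aemeasurable
      (measurable_kendallKernel_apply i j).aestronglyMeasurable]
  rfl

lemma kendallTau_eq_of_map_eq [SigmaFinite μ] {X Y : Ω → EuclideanSpace ℝ (Fin p)}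
    (hX : Measurable X) (hY : Measurable Y) (h : μ.map X = μ.map Y) :
    kendallTau μ X = kendallTau μ Y := by
  ext i j
  rw [kendallTau_apply_eq_integral_map μ hX, kendallTau_apply_eq_integral_map μ hY, h]

end KendallTau

theorem kendallTau_diagonal_of_signSymmetric_general {p : ℕ}
    {Ω : Type*} [MeasurableSpace Ω] (μ : Measure Ω) [IsProbabilityMeasure μ]
    (W : Ω → EuclideanSpace ℝ (Fin p)) (hW : Measurable W)
    (hsym : ∀ s : Fin p → ℝ, (∀ i, s i = 1 ∨ s i = -1) →
      Measure.map (fun ω => (WithLp.toLp 2 (fun i => s i * W ω i) : EuclideanSpace ℝ (Fin p))) μ =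
        Measure.map W μ) :
    ∀ i j : Fin p, i ≠ j → kendallTau μ W i j = 0 := by
  intro i j hij
  set s : Fin p → ℝ := fun k => if k = i then -1 else 1
  have hs : ∀ k, s k = 1 ∨ s k = -1 := fun k => by
    by_cases h : k = i <;> simp [s, h]
  have hs_abs : ∀ k, |s k| = 1 := fun k => by rcases hs k with h | h <;> simp [h]
  have hflip : s i * s j = -1 := by simp [s, hij.symm]
  have hinv := congrFun₂ (kendallTau_eq_of_map_eq μ (by fun_prop) hW (hsym s hs)) i j
  rw [kendallTau_signFlip_apply μ W hs_abs, hflip] at hinv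
  linarith

/-- Let `W` be a random vector in `ℝ^p` whose distribution is invariant
under every diagonal matrix `g` with diagonal entries in `{1, -1}`, and suppose
`P(W = W̃) = 0` where `W̃` is an independent copy of `W`.  Then the multivariate Kendall's
tau matrix of `W` is diagonal: its `(i, j)` entry is `0` for every pair `i ≠ j`. -/
theorem kendallTau_diagonal_of_signSymmetric {p : ℕ}
    {Ω : Type*} [MeasurableSpace Ω] (μ : Measure Ω) [IsProbabilityMeasure μ]
    (W : Ω → EuclideanSpace ℝ (Fin p)) (hW : Measurable W)
    (hsym : ∀ s : Fin p → ℝ, (∀ i, s i = 1 ∨ s i = -1) →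
      Measure.map (fun ω => (WithLp.toLp 2 (fun i => s i * W ω i) : EuclideanSpace ℝ (Fin p))) μ =
        Measure.map W μ)
    (hne : (μ.prod μ) {q : Ω × Ω | W q.1 = W q.2} = 0) :
    ∀ i j : Fin p, i ≠ j → kendallTau μ W i j = 0 :=
  kendallTau_diagonal_of_signSymmetric_general μ W hW hsym
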